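/- Let S ∈ R^{n×L} be a matrix of rank r with singular value decomposition S = U diag(σ₁,…,σ_r) Vᵀ where σ₁ ≥ … ≥ σ_r > 0. For τ > 0, define SVT_τ(S) = U diag((σ₁−τ)_+, …, (σ_r−τ)_+) Vᵀ. Then SVT_τ(S) is the unique minimizer of the function Z ↦ (1/2)‖Z − S‖_F² + τ‖Z‖_* over Z ∈ R^{n×L}. -/

import Mathlib

open Matrix

/-- Nuclear norm of a real matrix: sum of singular values,
i.e. square roots of the eigenvalues of `Aᴴ * A`. -/
noncomputable def nuclearNorm {m n : Type*} [Fintype m] [Fintype n] [DecidableEq n]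
    (A : Matrix m n ℝ) : ℝ :=
  ∑ i, Real.sqrt ((Matrix.isHermitian_conjTranspose_mul_self A).eigenvalues i)

/-- Squared Frobenius norm. -/
def frobSq {m n : Type*} [Fintype m] [Fintype n] (A : Matrix m n ℝ) : ℝ :=
  ∑ i, ∑ j, (A i j) ^ 2

/-! ### Auxiliary material for the proof -/

/-- Frobenius inner product. -/
noncomputable def svtIP {m n : Type*} [Fintype m] [Fintype n] (A B : Matrix m n ℝ) : ℝ :=
  ∑ i, ∑ j, A i j * B i j

lemma svtIP_comm {m n : Type*} [Fintype m] [Fintype n] (A B : Matrix m n ℝ) :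
    svtIP A B = svtIP B A := by
  simp [svtIP, mul_comm]

lemma svtIP_sub_left {m n : Type*} [Fintype m] [Fintype n] (A B C : Matrix m n ℝ) :
    svtIP (A - B) C = svtIP A C - svtIP B C := by
  simp [svtIP, Matrix.sub_apply, sub_mul, Finset.sum_sub_distrib]

lemma frobSq_sub' {m n : Type*} [Fintype m] [Fintype n] (A B : Matrix m n ℝ) :
    frobSq (A - B) = frobSq A - 2 * svtIP A B + frobSq B := by
  have h : ∀ (i : m) (j : n), (A i j - B i j) ^ 2
      = A i j ^ 2 - 2 * (A i j * B i j) + B i j ^ 2 := by intros; ring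
  simp only [frobSq, svtIP, Matrix.sub_apply, h, Finset.sum_add_distrib,
    Finset.sum_sub_distrib, Finset.mul_sum]

lemma frobSq_neg' {m n : Type*} [Fintype m] [Fintype n] (A : Matrix m n ℝ) :
    frobSq (-A) = frobSq A := by
  simp [frobSq]

lemma frobSq_pos' {m n : Type*} [Fintype m] [Fintype n] {A : Matrix m n ℝ} (h : A ≠ 0) :
    0 < frobSq A := by
  obtain ⟨i, j, hij⟩ : ∃ i j, A i j ≠ 0 := by
    by_contra h'
    push_neg at h'
    exact h (Matrix.ext fun i j => h' i j)
  have h1 : (A i j) ^ 2 ≤ ∑ j', A i j' ^ 2 :=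
    Finset.single_le_sum (f := fun j' => A i j' ^ 2) (fun _ _ => sq_nonneg _)
      (Finset.mem_univ j)
  have h2 : ∑ j', A i j' ^ 2 ≤ frobSq A :=
    Finset.single_le_sum (f := fun i' => ∑ j', A i' j' ^ 2)
      (fun _ _ => Finset.sum_nonneg fun _ _ => sq_nonneg _) (Finset.mem_univ i)
  have h0 : 0 < (A i j) ^ 2 := by positivity
  linarith

lemma svt_mulVec_dot {n r : ℕ} {U : Matrix (Fin n) (Fin r) ℝ} (hU : Uᵀ * U = 1)
    (x y : Fin r → ℝ) : (U *ᵥ x) ⬝ᵥ (U *ᵥ y) = x ⬝ᵥ y := by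
  rw [dotProduct_mulVec, ← mulVec_transpose, mulVec_mulVec, hU, one_mulVec]

lemma svt_proj_dot_le {n r : ℕ} {U : Matrix (Fin n) (Fin r) ℝ} (hU : Uᵀ * U = 1)
    (x : Fin n → ℝ) : (Uᵀ *ᵥ x) ⬝ᵥ (Uᵀ *ᵥ x) ≤ x ⬝ᵥ x := by
  set y := Uᵀ *ᵥ x with hy
  have h1 : x ⬝ᵥ (U *ᵥ y) = y ⬝ᵥ y := by
    rw [dotProduct_mulVec, ← mulVec_transpose, ← hy]
  have h2 : (U *ᵥ y) ⬝ᵥ (U *ᵥ y) = y ⬝ᵥ y := svt_mulVec_dot hU y y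
  have h3 : 0 ≤ (x - U *ᵥ y) ⬝ᵥ (x - U *ᵥ y) := by
    simp only [dotProduct, Pi.sub_apply]
    exact Finset.sum_nonneg fun k _ => mul_self_nonneg _
  have h4 : (x - U *ᵥ y) ⬝ᵥ (x - U *ᵥ y)
      = x ⬝ᵥ x - x ⬝ᵥ (U *ᵥ y) - (U *ᵥ y) ⬝ᵥ x + (U *ᵥ y) ⬝ᵥ (U *ᵥ y) := by
    simp only [dotProduct, Pi.sub_apply, ← Finset.sum_sub_distrib, ← Finset.sum_add_distrib]
    exact Finset.sum_congr rfl fun k _ => by ring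
  rw [h4, h1, h2, dotProduct_comm (U *ᵥ y) x, h1] at h3
  linarith

lemma svtIP_eq_sum_basis {nn L : ℕ} (A B : Matrix (Fin nn) (Fin L) ℝ)
    (b : OrthonormalBasis (Fin L) ℝ (EuclideanSpace ℝ (Fin L))) :
    svtIP A B = ∑ i, (A *ᵥ (b i)) ⬝ᵥ (B *ᵥ (b i)) := by
  have h : ∀ j : Fin nn, ∑ i, (A *ᵥ (b i)) j * (B *ᵥ (b i)) j = ∑ k, A j k * B j k := by
    intro j
    have hp := b.sum_inner_mul_inner
      ((WithLp.equiv 2 (Fin L → ℝ)).symm (A j)) ((WithLp.equiv 2 (Fin L → ℝ)).symm (B j))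
    simp only [PiLp.inner_apply, RCLike.inner_apply, starRingEnd_apply, star_trivial,
      WithLp.equiv_symm_apply, WithLp.ofLp_toLp] at hp
    rw [Finset.sum_congr rfl fun k _ => mul_comm (A j k) (B j k), ← hp]
    refine Finset.sum_congr rfl fun i _ => ?_
    simp only [mulVec, dotProduct]
    congr 1
    exact Finset.sum_congr rfl fun k _ => mul_comm _ _
  simp only [svtIP, dotProduct]
  conv_rhs => rw [Finset.sum_comm]
  exact Finset.sum_congr rfl fun j _ => (h j).symm

lemma svt_basis_dot_one {L : ℕ} (b : OrthonormalBasis (Fin L) ℝ (EuclideanSpace ℝ (Fin L)))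
    (i : Fin L) : (b i) ⬝ᵥ (b i) = 1 := by
  have := orthonormal_iff_ite.mp b.orthonormal i i
  simp only [PiLp.inner_apply, RCLike.inner_apply, starRingEnd_apply, star_trivial] at this
  simpa [dotProduct] using this

lemma svt_eigen_dot {nn L : ℕ} (Z : Matrix (Fin nn) (Fin L) ℝ) (i : Fin L) :
    (Z *ᵥ ((Matrix.isHermitian_conjTranspose_mul_self Z).eigenvectorBasis i)) ⬝ᵥ
      (Z *ᵥ ((Matrix.isHermitian_conjTranspose_mul_self Z).eigenvectorBasis i))
      = (Matrix.isHermitian_conjTranspose_mul_self Z).eigenvalues i := by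
  set hH := Matrix.isHermitian_conjTranspose_mul_self Z
  set v : Fin L → ℝ := (hH.eigenvectorBasis i).ofLp with hv
  have he : (Zᴴ * Z) *ᵥ v = hH.eigenvalues i • v := hH.mulVec_eigenvectorBasis i
  calc (Z *ᵥ v) ⬝ᵥ (Z *ᵥ v) = ((Z *ᵥ v) ᵥ* Z) ⬝ᵥ v := dotProduct_mulVec _ _ _
    _ = (Zᵀ *ᵥ (Z *ᵥ v)) ⬝ᵥ v := by rw [← mulVec_transpose]
    _ = ((Zᵀ * Z) *ᵥ v) ⬝ᵥ v := by rw [mulVec_mulVec]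
    _ = ((Zᴴ * Z) *ᵥ v) ⬝ᵥ v := by rw [Matrix.conjTranspose_eq_transpose_of_trivial]
    _ = (hH.eigenvalues i • v) ⬝ᵥ v := by rw [he]
    _ = hH.eigenvalues i * ((v) ⬝ᵥ v) := smul_dotProduct _ _ _
    _ = hH.eigenvalues i := by rw [svt_basis_dot_one hH.eigenvectorBasis i, mul_one]

lemma svt_mulVec_triple {n L r : ℕ} (U : Matrix (Fin n) (Fin r) ℝ)
    (V : Matrix (Fin L) (Fin r) ℝ) (d : Fin r → ℝ) (v : Fin L → ℝ) :
    (U * diagonal d * Vᵀ) *ᵥ v = U *ᵥ (diagonal d *ᵥ (Vᵀ *ᵥ v)) := by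
  rw [← mulVec_mulVec, ← mulVec_mulVec]

lemma svt_Wv_dot_le {n L r : ℕ} {U : Matrix (Fin n) (Fin r) ℝ} {V : Matrix (Fin L) (Fin r) ℝ}
    (hU : Uᵀ * U = 1) (hV : Vᵀ * V = 1) {τ : ℝ} (hτ : 0 ≤ τ) {Dm : Fin r → ℝ}
    (hDm0 : ∀ k, 0 ≤ Dm k) (hDmτ : ∀ k, Dm k ≤ τ)
    (v : Fin L → ℝ) (hv : v ⬝ᵥ v = 1) (u : Fin n → ℝ) :
    ((U * diagonal Dm * Vᵀ) *ᵥ v) ⬝ᵥ u ≤ τ * Real.sqrt (u ⬝ᵥ u) := by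
  set a := Vᵀ *ᵥ v with ha'
  set c := Uᵀ *ᵥ u with hc'
  have hrw : ((U * diagonal Dm * Vᵀ) *ᵥ v) ⬝ᵥ u = ∑ k, Dm k * (a k * c k) := by
    rw [svt_mulVec_triple, dotProduct_comm, dotProduct_mulVec u U, ← mulVec_transpose, ← hc']
    simp only [dotProduct, mulVec_diagonal]
    exact Finset.sum_congr rfl fun k _ => by ring
  have habs : ∀ k, Dm k * (a k * c k) ≤ τ * (|a k| * |c k|) := by
    intro k
    calc Dm k * (a k * c k) ≤ Dm k * |a k * c k| :=
          mul_le_mul_of_nonneg_left (le_abs_self _) (hDm0 k)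
      _ ≤ τ * |a k * c k| := mul_le_mul_of_nonneg_right (hDmτ k) (abs_nonneg _)
      _ = τ * (|a k| * |c k|) := by rw [abs_mul]
  have hcs : (∑ k, |a k| * |c k|) ^ 2 ≤ (∑ k, |a k| ^ 2) * (∑ k, |c k| ^ 2) :=
    Finset.sum_mul_sq_le_sq_mul_sq _ _ _
  have ha1 : ∑ k, |a k| ^ 2 ≤ 1 := by
    have := svt_proj_dot_le hV v
    rw [hv] at this
    simpa [dotProduct, sq_abs, pow_two] using this
  have hcu : ∑ k, |c k| ^ 2 ≤ u ⬝ᵥ u := by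
    have := svt_proj_dot_le hU u
    simpa [dotProduct, sq_abs, pow_two] using this
  have h0 : (0:ℝ) ≤ ∑ k, |a k| * |c k| :=
    Finset.sum_nonneg fun k _ => mul_nonneg (abs_nonneg _) (abs_nonneg _)
  have huu : (0:ℝ) ≤ u ⬝ᵥ u := Finset.sum_nonneg fun k _ => mul_self_nonneg _
  have hsq : (∑ k, |a k| * |c k|) ^ 2 ≤ u ⬝ᵥ u := by
    have hc0 : (0:ℝ) ≤ ∑ k, |c k| ^ 2 := Finset.sum_nonneg fun k _ => sq_nonneg _
    nlinarith
  have hs : ∑ k, |a k| * |c k| ≤ Real.sqrt (u ⬝ᵥ u) := (Real.le_sqrt h0 huu).mpr hsq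
  calc ((U * diagonal Dm * Vᵀ) *ᵥ v) ⬝ᵥ u = ∑ k, Dm k * (a k * c k) := hrw
    _ ≤ ∑ k, τ * (|a k| * |c k|) := Finset.sum_le_sum fun k _ => habs k
    _ = τ * ∑ k, |a k| * |c k| := by rw [Finset.mul_sum]
    _ ≤ τ * Real.sqrt (u ⬝ᵥ u) := mul_le_mul_of_nonneg_left hs hτ

lemma svt_ip_le_nuclear {n L r : ℕ} {U : Matrix (Fin n) (Fin r) ℝ}
    {V : Matrix (Fin L) (Fin r) ℝ} (hU : Uᵀ * U = 1) (hV : Vᵀ * V = 1)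
    {τ : ℝ} (hτ : 0 ≤ τ) {Dm : Fin r → ℝ}
    (hDm0 : ∀ k, 0 ≤ Dm k) (hDmτ : ∀ k, Dm k ≤ τ)
    (Z : Matrix (Fin n) (Fin L) ℝ) :
    svtIP (U * diagonal Dm * Vᵀ) Z ≤ τ * nuclearNorm Z := by
  rw [svtIP_eq_sum_basis _ _ (Matrix.isHermitian_conjTranspose_mul_self Z).eigenvectorBasis,
    nuclearNorm, Finset.mul_sum]
  refine Finset.sum_le_sum fun i _ => ?_
  have hvv := svt_basis_dot_one (Matrix.isHermitian_conjTranspose_mul_self Z).eigenvectorBasis i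
  have hZ := svt_eigen_dot Z i
  have := svt_Wv_dot_le hU hV hτ hDm0 hDmτ
    ((Matrix.isHermitian_conjTranspose_mul_self Z).eigenvectorBasis i) hvv
    (Z *ᵥ ((Matrix.isHermitian_conjTranspose_mul_self Z).eigenvectorBasis i))
  rwa [hZ] at this

lemma svt_ip_eq_nuclear {n L r : ℕ} {U : Matrix (Fin n) (Fin r) ℝ}
    {V : Matrix (Fin L) (Fin r) ℝ} (hU : Uᵀ * U = 1) (hV : Vᵀ * V = 1)
    {τ : ℝ} {Dm Dh : Fin r → ℝ} (hDh0 : ∀ k, 0 ≤ Dh k)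
    (hmul : ∀ k, Dm k * Dh k = τ * Dh k) :
    svtIP (U * diagonal Dm * Vᵀ) (U * diagonal Dh * Vᵀ)
      = τ * nuclearNorm (U * diagonal Dh * Vᵀ) := by
  set Zh := U * diagonal Dh * Vᵀ with hZh
  rw [svtIP_eq_sum_basis _ _ (Matrix.isHermitian_conjTranspose_mul_self Zh).eigenvectorBasis,
    nuclearNorm, Finset.mul_sum]
  refine Finset.sum_congr rfl fun i _ => ?_
  set hH := Matrix.isHermitian_conjTranspose_mul_self Zh
  set lam := hH.eigenvalues i with hlamdef
  set v : Fin L → ℝ := (hH.eigenvectorBasis i).ofLp with hvdef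
  set bb := Vᵀ *ᵥ v with hbb
  -- Gram matrix computation
  have hgram : Zhᴴ * Zh = V * diagonal (fun k => Dh k * Dh k) * Vᵀ := by
    rw [hZh, Matrix.conjTranspose_eq_transpose_of_trivial]
    rw [Matrix.transpose_mul, Matrix.transpose_mul, Matrix.transpose_transpose,
      Matrix.diagonal_transpose]
    calc V * (diagonal Dh * Uᵀ) * (U * diagonal Dh * Vᵀ)
        = V * diagonal Dh * (Uᵀ * U) * (diagonal Dh * Vᵀ) := by
          simp only [Matrix.mul_assoc]
      _ = V * diagonal Dh * diagonal Dh * Vᵀ := by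
          rw [hU, Matrix.mul_one]
          simp only [Matrix.mul_assoc]
      _ = V * diagonal (fun k => Dh k * Dh k) * Vᵀ := by
          rw [Matrix.mul_assoc V, Matrix.diagonal_mul_diagonal]
  -- eigen equation transported to bb
  have heig : ∀ k, Dh k * Dh k * bb k = lam * bb k := by
    have he : (Zhᴴ * Zh) *ᵥ v = lam • v := hH.mulVec_eigenvectorBasis i
    rw [hgram] at he
    have h2 : Vᵀ *ᵥ ((V * diagonal (fun k => Dh k * Dh k) * Vᵀ) *ᵥ v) = Vᵀ *ᵥ (lam • v) := by
      rw [he]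
    rw [mulVec_mulVec, mulVec_smul] at h2
    have h3 : Vᵀ * (V * diagonal (fun k => Dh k * Dh k) * Vᵀ)
        = diagonal (fun k => Dh k * Dh k) * Vᵀ := by
      calc Vᵀ * (V * diagonal (fun k => Dh k * Dh k) * Vᵀ)
          = (Vᵀ * V) * diagonal (fun k => Dh k * Dh k) * Vᵀ := by
            simp only [Matrix.mul_assoc]
        _ = diagonal (fun k => Dh k * Dh k) * Vᵀ := by rw [hV, Matrix.one_mul]
    rw [h3, ← mulVec_mulVec, ← hbb] at h2
    intro k
    have := congrFun h2 k
    simpa [mulVec_diagonal] using this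
  have hlam0 : 0 ≤ lam := Matrix.eigenvalues_conjTranspose_mul_self_nonneg Zh i
  -- lam via norm of Zh *ᵥ v
  have hlam : lam = ∑ k, Dh k * bb k * (Dh k * bb k) := by
    have h1 := svt_eigen_dot Zh i
    rw [← hvdef, ← hlamdef] at h1
    rw [svt_mulVec_triple, svt_mulVec_dot hU, ← hbb] at h1
    rw [← h1]
    simp only [dotProduct, mulVec_diagonal]
  -- pointwise: Dh k * (bb k)^2 = sqrt lam * (bb k)^2
  have hpt : ∀ k, Dh k * (bb k * bb k) = Real.sqrt lam * (bb k * bb k) := by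
    intro k
    rcases eq_or_ne (bb k) 0 with h0 | h0
    · rw [h0]; ring
    · have hDD : Dh k * Dh k = lam := mul_right_cancel₀ h0 (heig k)
      have hD : Dh k = Real.sqrt lam := by
        rw [← hDD, Real.sqrt_mul_self (hDh0 k)]
      rw [hD]
  -- the left-hand side
  have hLHS : ((U * diagonal Dm * Vᵀ) *ᵥ v) ⬝ᵥ (Zh *ᵥ v)
      = τ * ∑ k, Dh k * (bb k * bb k) := by
    rw [hZh, svt_mulVec_triple, svt_mulVec_triple, svt_mulVec_dot hU, ← hbb, Finset.mul_sum]
    simp only [dotProduct, mulVec_diagonal]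
    refine Finset.sum_congr rfl fun k _ => ?_
    linear_combination (bb k * bb k) * hmul k
  rw [hLHS]
  -- now reduce to ∑ k, Dh k * bb k ^ 2 = sqrt lam
  have hsum : ∑ k, Dh k * (bb k * bb k) = Real.sqrt lam := by
    rw [Finset.sum_congr rfl fun k _ => hpt k, ← Finset.mul_sum]
    rcases eq_or_ne lam 0 with hl0 | hl0
    · rw [hl0, Real.sqrt_zero]; simp
    · have hbb1 : ∑ k, bb k * bb k = 1 := by
        have hkey : lam * (∑ k, bb k * bb k) = lam := by
          rw [Finset.mul_sum]
          calc ∑ k, lam * (bb k * bb k) = ∑ k, Dh k * bb k * (Dh k * bb k) := by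
                refine Finset.sum_congr rfl fun k _ => ?_
                linear_combination (-(bb k)) * heig k
            _ = lam := hlam.symm
        exact mul_left_cancel₀ hl0 (by rw [mul_one]; exact hkey)
      rw [hbb1, mul_one]
  rw [hsum]

/-- Singular value thresholding `SVT_τ(S)` is the unique minimizer of
`Z ↦ (1/2)‖Z − S‖_F² + τ‖Z‖_*`. -/
theorem svt_unique_minimizer {n L r : ℕ}
    (U : Matrix (Fin n) (Fin r) ℝ) (V : Matrix (Fin L) (Fin r) ℝ)
    (σ : Fin r → ℝ) (τ : ℝ) (hτ : 0 < τ)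
    (hU : Uᵀ * U = 1) (hV : Vᵀ * V = 1)
    (hσpos : ∀ i, 0 < σ i) (hσmono : Antitone σ)
    (S : Matrix (Fin n) (Fin L) ℝ)
    (hS : S = U * Matrix.diagonal σ * Vᵀ)
    (hrank : S.rank = r) :
    ∀ Z : Matrix (Fin n) (Fin L) ℝ,
      Z ≠ U * Matrix.diagonal (fun i => max (σ i - τ) 0) * Vᵀ →
        (1 / 2) * frobSq (U * Matrix.diagonal (fun i => max (σ i - τ) 0) * Vᵀ - S)
            + τ * nuclearNorm (U * Matrix.diagonal (fun i => max (σ i - τ) 0) * Vᵀ)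
          < (1 / 2) * frobSq (Z - S) + τ * nuclearNorm Z := by
  intro Z hZ
  set Dh : Fin r → ℝ := fun i => max (σ i - τ) 0 with hDh
  set Dm : Fin r → ℝ := fun i => min (σ i) τ with hDm
  set Zh := U * Matrix.diagonal Dh * Vᵀ with hZh
  set W := U * Matrix.diagonal Dm * Vᵀ with hW
  have hDm0 : ∀ k, 0 ≤ Dm k := fun k => le_min (hσpos k).le hτ.le
  have hDmτ : ∀ k, Dm k ≤ τ := fun k => min_le_right _ _
  have hDh0 : ∀ k, 0 ≤ Dh k := fun k => le_max_right _ _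
  have hmul : ∀ k, Dm k * Dh k = τ * Dh k := by
    intro k
    rcases le_or_gt (σ k) τ with h | h
    · have h0 : Dh k = 0 := by
        simp only [hDh]
        exact max_eq_right (sub_nonpos.mpr h)
      rw [h0, mul_zero, mul_zero]
    · have h0 : Dm k = τ := min_eq_right h.le
      rw [h0]
  have hdiag : Matrix.diagonal σ = Matrix.diagonal Dh + Matrix.diagonal Dm := by
    rw [Matrix.diagonal_add]
    refine congrArg Matrix.diagonal (funext fun k => ?_)
    show σ k = Dh k + Dm k
    simp only [hDh, hDm]
    rcases le_or_gt (σ k) τ with h | h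
    · rw [max_eq_right (sub_nonpos.mpr h), min_eq_left h, zero_add]
    · rw [max_eq_left (sub_nonneg.mpr h.le), min_eq_right h.le]
      ring
  have hSsum : S = Zh + W := by
    rw [hS, hdiag, Matrix.mul_add, Matrix.add_mul]
  have hle : svtIP W Z ≤ τ * nuclearNorm Z := svt_ip_le_nuclear hU hV hτ.le hDm0 hDmτ Z
  have heq : svtIP W Zh = τ * nuclearNorm Zh := svt_ip_eq_nuclear hU hV hDh0 hmul
  have hpos : 0 < frobSq (Z - Zh) := frobSq_pos' (sub_ne_zero.mpr hZ)
  have e1 : Zh - S = -W := by rw [hSsum]; abel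
  have e2 : Z - S = (Z - Zh) - W := by rw [hSsum]; abel
  have egoal1 : frobSq (Zh - S) = frobSq W := by rw [e1, frobSq_neg']
  have egoal2 : frobSq (Z - S)
      = frobSq (Z - Zh) - 2 * (svtIP W Z - svtIP W Zh) + frobSq W := by
    rw [e2, frobSq_sub', svtIP_sub_left, svtIP_comm Z W, svtIP_comm Zh W]
  rw [egoal1, egoal2]
  linarith [hle, heq, hpos]
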